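/- arXiv:1502.01336 — 3 statements merged into one kernel-verified Lean document; each statement's English description precedes it below -/
import Mathlib

section
/- Let ν > 1 and 0 < r_− < r_+ be real numbers, s = √(r_+ r_− (ν²+3)), a = 2ν r_+ − s, R²(r) = (r/4)[3(ν²−1)r + (ν²+3)(r_+ + r_−) − 4ν s], and r_C = (4ν² r_+ − (ν²+3) r_−)/(3(ν²−1)). Then a²·(ν²+3)·(r_C − r_+)(r_C − r_−) = (a·(2ν r_C − s) − 4R²(r_C))². Equivalently, if R²(r_C) > 0, then N²(r_C) = R²(r_C)·(N^θ(r_C) + Ω_H)², i.e. the Killing vector χ = ∂_t + Ω_H ∂_θ is null exactly at the speed-of-light surface r = r_C. -/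
/-!
The function `f(r) = a(2νr − s) − 4R²(r)` vanishes at the outer horizon, since `s² = r₊r₋(ν²+3)`
makes `4R²(r₊) = (2νr₊ − s)² = a²`. Hence `f(r) = (r − r₊)(2νs − (ν²+3)r₋ − 3(ν²−1)r)`, and the
defining relation `3(ν²−1)r_C = 4ν²r₊ − (ν²+3)r₋` of the speed-of-light surface turns the second
factor at `r_C` into `−2νa` and `(ν²+3)(r_C − r₋)` into `4ν²(r_C − r₊)`, so both sides of the
identity equal `4ν²a²(r_C − r₊)²`. Dividing by `4a²R²(r_C)` gives the nullity of `χ`.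
-/

section WarpedAdS

variable {ν rp rm s : ℝ}

lemma sub_four_mul_rSq_factor (hs : s ^ 2 = rp * rm * (ν ^ 2 + 3)) (r : ℝ) :
    (2 * ν * rp - s) * (2 * ν * r - s)
        - 4 * (r / 4 * (3 * (ν ^ 2 - 1) * r + (ν ^ 2 + 3) * (rp + rm) - 4 * ν * s))
      = (r - rp) * (2 * ν * s - (ν ^ 2 + 3) * rm - 3 * (ν ^ 2 - 1) * r) := by
  linear_combination hs

lemma three_mul_speedOfLight_radius {rC : ℝ} (hν : 1 < ν)
    (hrC : rC = (4 * ν ^ 2 * rp - (ν ^ 2 + 3) * rm) / (3 * (ν ^ 2 - 1))) :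
    3 * (ν ^ 2 - 1) * rC = 4 * ν ^ 2 * rp - (ν ^ 2 + 3) * rm := by
  have : 3 * (ν ^ 2 - 1) ≠ 0 := by nlinarith
  rw [hrC, mul_div_cancel₀ _ this]

lemma sq_eq_at_speedOfLight_radius {rC : ℝ} (hs : s ^ 2 = rp * rm * (ν ^ 2 + 3))
    (hC : 3 * (ν ^ 2 - 1) * rC = 4 * ν ^ 2 * rp - (ν ^ 2 + 3) * rm) :
    (2 * ν * rp - s) ^ 2 * (ν ^ 2 + 3) * (rC - rp) * (rC - rm)
      = ((2 * ν * rp - s) * (2 * ν * rC - s)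
          - 4 * (rC / 4 * (3 * (ν ^ 2 - 1) * rC + (ν ^ 2 + 3) * (rp + rm) - 4 * ν * s))) ^ 2 := by
  calc (2 * ν * rp - s) ^ 2 * (ν ^ 2 + 3) * (rC - rp) * (rC - rm)
      = (2 * ν * rp - s) ^ 2 * (rC - rp) * ((ν ^ 2 + 3) * (rC - rm)) := by ring
    _ = (2 * ν * rp - s) ^ 2 * (rC - rp) * (4 * ν ^ 2 * (rC - rp)) := by
        rw [show (ν ^ 2 + 3) * (rC - rm) = 4 * ν ^ 2 * (rC - rp) by linear_combination -hC]
    _ = ((rC - rp) * (2 * ν * s - (ν ^ 2 + 3) * rm - 3 * (ν ^ 2 - 1) * rC)) ^ 2 := by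
        rw [hC]; ring
    _ = _ := by rw [sub_four_mul_rSq_factor hs]

end WarpedAdS

lemma killing_null_of_sq_eq {q w R a : ℝ} (hR : R ≠ 0) (ha : a ≠ 0)
    (h : a ^ 2 * q = (a * w - 4 * R) ^ 2) :
    q / (4 * R) = R * (w / (2 * R) + -2 / a) ^ 2 := by
  field_simp
  linear_combination 4 * h

/-- For the spacelike stretched warped AdS₃ black hole, with `a = 2νr₊ − s` and
`r_C` the speed-of-light surface radius, the identity
`a²(ν²+3)(r_C − r₊)(r_C − r₋) = (a(2νr_C − s) − 4R²(r_C))²` holds; equivalently,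
if `R²(r_C) > 0`, then `N²(r_C) = R²(r_C)(N^θ(r_C) + Ω_H)²`, i.e. the Killing
vector `χ = ∂_t + Ω_H ∂_θ` is null exactly at `r = r_C`. -/
theorem killing_vector_null_at_speed_of_light_surface
    (ν rm rp : ℝ) (hν : 1 < ν) (hrm : 0 < rm) (hrmp : rm < rp)
    (s : ℝ) (hs : s = Real.sqrt (rp * rm * (ν ^ 2 + 3)))
    (a : ℝ) (ha : a = 2 * ν * rp - s)
    (Rsq Nsq Nθ : ℝ → ℝ)
    (hR : ∀ r, Rsq r = (r / 4) * (3 * (ν ^ 2 - 1) * r + (ν ^ 2 + 3) * (rp + rm) - 4 * ν * s))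
    (hNsq : ∀ r, Nsq r = (ν ^ 2 + 3) * (r - rp) * (r - rm) / (4 * Rsq r))
    (hNθ : ∀ r, Nθ r = (2 * ν * r - s) / (2 * Rsq r))
    (ΩH : ℝ) (hΩH : ΩH = -2 / (2 * ν * rp - s))
    (rC : ℝ) (hrC : rC = (4 * ν ^ 2 * rp - (ν ^ 2 + 3) * rm) / (3 * (ν ^ 2 - 1))) :
    a ^ 2 * (ν ^ 2 + 3) * (rC - rp) * (rC - rm)
        = (a * (2 * ν * rC - s) - 4 * Rsq rC) ^ 2 ∧
      (0 < Rsq rC → Nsq rC = Rsq rC * (Nθ rC + ΩH) ^ 2) := by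
  have hrp : 0 < rp := hrm.trans hrmp
  have hs2 : s ^ 2 = rp * rm * (ν ^ 2 + 3) := hs ▸ Real.sq_sqrt (by positivity)
  have key : a ^ 2 * (ν ^ 2 + 3) * (rC - rp) * (rC - rm)
      = (a * (2 * ν * rC - s) - 4 * Rsq rC) ^ 2 := by
    rw [hR, ha]
    exact sq_eq_at_speedOfLight_radius hs2 (three_mul_speedOfLight_radius hν hrC)
  refine ⟨key, fun hRpos => ?_⟩
  have ha0 : a ≠ 0 := by
    -- for `a = 0`, `key` reads `0 = (4R²(r_C))²`
    rintro rfl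
    nlinarith
  rw [hNsq, hNθ, hΩH, ← ha]
  exact killing_null_of_sq_eq hRpos.ne' ha0 (by rw [← key]; ring)
end

section
/- Let ν > 1 and 0 < r_− < r_+ be real numbers, s = √(r_+ r_− (ν²+3)), Ω_H = −2/(2ν r_+ − s), and r_C = (4ν² r_+ − (ν²+3) r_−)/(3(ν²−1)). Suppose R²(r) > 0 for all r in [r_+, r_C]. Then for every r with r_+ < r < r_C one has R²(r)·(N^θ(r) + Ω_H)² < N²(r), i.e. the horizon-generating Killing vector χ = ∂_t + Ω_H ∂_θ is timelike in the open region between the outer horizon and the speed-of-light surface; and for every r > r_C with R²(r) > 0 one has R²(r)·(N^θ(r) + Ω_H)² > N²(r), i.e. χ is spacelike beyond the speed-of-light surface. -/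
/-!
Put `D = 2ν r₊ - s`, so that `Ω_H = -2/D`. Clearing the common denominator `4 R² D²`,
the difference `R²(N^θ + Ω_H)² - N²` has numerator `((2νr - s) D - 4R²)² - (ν²+3)(r-r₊)(r-r₋) D²`,
a quartic in `r` which (using `s² = r₊ r₋ (ν²+3)`) factors as
`3(ν²-1) (r - r₊) (r - r_C) K(r - r₊)` with `K(t) = 3(ν²-1) t² + c t + D²` (`chiQuadratic`).
Both `D` and `c` are positive by comparing squares (for `c` through AM-GM and `ν > 1`), so
`K(t) > 0` for `t > 0` and the sign of the difference is the sign of `r - r_C` outside the horizon.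
-/

namespace WarpedAdS3

def chiQuadratic (ν rp rm s t : ℝ) : ℝ :=
  3 * (ν ^ 2 - 1) * t ^ 2 + ((7 * ν ^ 2 - 3) * rp + (ν ^ 2 + 3) * rm - 4 * ν * s) * t
    + (2 * ν * rp - s) ^ 2

section

variable {ν rp rm s : ℝ}

lemma angularVelocity_denom_pos (hν : 1 < ν) (hrm : 0 < rm) (hrmp : rm < rp)
    (hs2 : s ^ 2 = rp * rm * (ν ^ 2 + 3)) : 0 < 2 * ν * rp - s := by
  have hrp : 0 < rp := hrm.trans hrmp
  have : s ^ 2 < (2 * ν * rp) ^ 2 := by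
    rw [hs2]
    nlinarith [mul_lt_mul_of_pos_left hrmp (by positivity : 0 < rp * (ν ^ 2 + 3)),
      mul_pos (mul_pos hrp hrp) (by nlinarith : 0 < ν ^ 2 - 1)]
  linarith [lt_of_pow_lt_pow_left₀ 2 (by positivity) this]

lemma chiQuadratic_linear_coeff_pos (hν : 1 < ν) (hrm : 0 < rm) (hrp : 0 < rp)
    (hs2 : s ^ 2 = rp * rm * (ν ^ 2 + 3)) :
    0 < (7 * ν ^ 2 - 3) * rp + (ν ^ 2 + 3) * rm - 4 * ν * s := by
  have hL : 0 < (7 * ν ^ 2 - 3) * rp + (ν ^ 2 + 3) * rm :=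
    add_pos (mul_pos (by nlinarith) hrp) (by positivity)
  -- AM-GM: `(a rp + b rm)² ≥ 4ab rp rm`, and `4(7ν²-3)(ν²+3) > 16ν²(ν²+3)` as `ν > 1`
  have : (4 * ν * s) ^ 2 < ((7 * ν ^ 2 - 3) * rp + (ν ^ 2 + 3) * rm) ^ 2 := by
    nlinarith [sq_nonneg ((7 * ν ^ 2 - 3) * rp - (ν ^ 2 + 3) * rm),
      mul_pos (mul_pos hrp hrm) (by nlinarith : 0 < ν ^ 2 - 1)]
  linarith [lt_of_pow_lt_pow_left₀ 2 hL.le this]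

lemma chiQuadratic_pos (hν : 1 < ν) (hrm : 0 < rm) (hrp : 0 < rp)
    (hs2 : s ^ 2 = rp * rm * (ν ^ 2 + 3)) {t : ℝ} (ht : 0 < t) :
    0 < chiQuadratic ν rp rm s t := by
  have hc := mul_pos (chiQuadratic_linear_coeff_pos hν hrm hrp hs2) ht
  have hquad : 0 < 3 * (ν ^ 2 - 1) * t ^ 2 := by
    have : 0 < ν ^ 2 - 1 := by nlinarith
    positivity
  unfold chiQuadratic
  positivity

lemma rp_lt_speedOfLightRadius (hν : 1 < ν) (hrmp : rm < rp) :
    rp < (4 * ν ^ 2 * rp - (ν ^ 2 + 3) * rm) / (3 * (ν ^ 2 - 1)) := by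
  rw [lt_div_iff₀ (by nlinarith)]
  nlinarith

lemma chi_norm_numerator_eq (hs2 : s ^ 2 = rp * rm * (ν ^ 2 + 3)) (r : ℝ) :
    ((2 * ν * r - s) * (2 * ν * rp - s) -
        4 * ((r / 4) * (3 * (ν ^ 2 - 1) * r + (ν ^ 2 + 3) * (rp + rm) - 4 * ν * s))) ^ 2 -
      (ν ^ 2 + 3) * (r - rp) * (r - rm) * (2 * ν * rp - s) ^ 2 =
      (r - rp) * (3 * (ν ^ 2 - 1) * r - (4 * ν ^ 2 * rp - (ν ^ 2 + 3) * rm)) *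
        chiQuadratic ν rp rm s (r - rp) := by
  unfold chiQuadratic
  linear_combination (3 * rp * rm + ν ^ 2 * rp * rm - 4 * s * ν * rp + s ^ 2
    - 6 * r * rm - 6 * r * rp - 2 * r * ν ^ 2 * rm + 6 * r * ν ^ 2 * rp
    + 4 * r * s * ν + 6 * r ^ 2 - 6 * r ^ 2 * ν ^ 2) * hs2

end

lemma mul_sq_div_add_sub_div {K : Type*} [Field K] {X D : K} (hX : X ≠ 0) (hD : D ≠ 0)
    (a n : K) :
    X * (a / (2 * X) + -2 / D) ^ 2 - n / (4 * X) = ((a * D - 4 * X) ^ 2 - n * D ^ 2) / (4 * X * D ^ 2) := by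
  field_simp
  ring

end WarpedAdS3

open WarpedAdS3 in
/-- For the spacelike stretched warped AdS₃ black hole, assuming `R² > 0` on
`[r₊, r_C]`, the horizon-generating Killing vector `χ = ∂_t + Ω_H ∂_θ` is timelike
strictly between the outer horizon and the speed-of-light surface
(`R²(N^θ+Ω_H)² < N²` for `r₊ < r < r_C`) and spacelike beyond it
(`R²(N^θ+Ω_H)² > N²` for `r > r_C` with `R²(r) > 0`). -/
theorem killing_vector_timelike_between_horizon_and_sls
    (ν rm rp : ℝ) (hν : 1 < ν) (hrm : 0 < rm) (hrmp : rm < rp)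
    (s : ℝ) (hs : s = Real.sqrt (rp * rm * (ν ^ 2 + 3)))
    (ΩH : ℝ) (hΩH : ΩH = -2 / (2 * ν * rp - s))
    (rC : ℝ) (hrC : rC = (4 * ν ^ 2 * rp - (ν ^ 2 + 3) * rm) / (3 * (ν ^ 2 - 1)))
    (Rsq Nsq Nθ : ℝ → ℝ)
    (hR : ∀ r, Rsq r = (r / 4) * (3 * (ν ^ 2 - 1) * r + (ν ^ 2 + 3) * (rp + rm) - 4 * ν * s))
    (hNsq : ∀ r, Nsq r = (ν ^ 2 + 3) * (r - rp) * (r - rm) / (4 * Rsq r))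
    (hNθ : ∀ r, Nθ r = (2 * ν * r - s) / (2 * Rsq r))
    (hRpos : ∀ r, rp ≤ r → r ≤ rC → 0 < Rsq r) :
    (∀ r, rp < r → r < rC → Rsq r * (Nθ r + ΩH) ^ 2 < Nsq r) ∧
      (∀ r, rC < r → 0 < Rsq r → Nsq r < Rsq r * (Nθ r + ΩH) ^ 2) := by
  have hrp : 0 < rp := hrm.trans hrmp
  have hs2 : s ^ 2 = rp * rm * (ν ^ 2 + 3) := hs ▸ Real.sq_sqrt (by positivity)
  have hB : 0 < 3 * (ν ^ 2 - 1) := by nlinarith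
  have h3C : 3 * (ν ^ 2 - 1) * rC = 4 * ν ^ 2 * rp - (ν ^ 2 + 3) * rm := by
    rw [hrC, mul_div_cancel₀ _ hB.ne']
  have hD := angularVelocity_denom_pos hν hrm hrmp hs2
  have hK (r : ℝ) (hr : rp < r) := chiQuadratic_pos hν hrm hrp hs2 (sub_pos.2 hr)
  have key (r : ℝ) (hX : 0 < Rsq r) : Rsq r * (Nθ r + ΩH) ^ 2 - Nsq r =
      3 * (ν ^ 2 - 1) * (r - rp) * (r - rC) * chiQuadratic ν rp rm s (r - rp) /
        (4 * Rsq r * (2 * ν * rp - s) ^ 2) := by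
    rw [hNsq, hNθ, hΩH, mul_sq_div_add_sub_div hX.ne' hD.ne']
    congr 1
    rw [hR r, chi_norm_numerator_eq hs2, ← h3C]
    ring
  constructor
  · intro r hr hrC'
    have hX := hRpos r hr.le hrC'.le
    rw [← sub_neg, key r hX]
    refine div_neg_of_neg_of_pos (mul_neg_of_neg_of_pos ?_ (hK r hr)) (by positivity)
    exact mul_neg_of_pos_of_neg (mul_pos hB (sub_pos.2 hr)) (sub_neg.2 hrC')
  · intro r hrC' hX
    have hr : rp < r := (hrC ▸ rp_lt_speedOfLightRadius hν hrmp).trans hrC'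
    rw [← sub_pos, key r hX]
    exact div_pos (mul_pos (mul_pos (mul_pos hB (sub_pos.2 hr)) (sub_pos.2 hrC')) (hK r hr))
      (by positivity)
end

section
/- Let ν > 1 and 0 < r_− < r_+ be real numbers and s = √(r_+ r_− (ν²+3)). Then for every r ≥ r_+ with R²(r) > 0, one has R²(r)·(N^θ(r))² > N²(r); that is, the Killing vector ∂_t is spacelike everywhere on and outside the outer horizon, so the warped AdS₃ black hole spacetime has no static limit. -/
/-!
The squared norm of `∂_t` is identically `1` wherever `R² ≠ 0`: over the common denominator
`4R²` its numerator is `(2νr - s)² - (ν² + 3)(r - r₊)(r - r₋)`, and once `s²` is replaced by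
`r₊r₋(ν² + 3)` this is exactly `4R²`. In particular it never vanishes.
-/

lemma mul_div_two_mul_sq_sub_div_four_mul_eq_one {R A B : ℝ} (hR : R ≠ 0)
    (h : B ^ 2 - A = 4 * R) : R * (B / (2 * R)) ^ 2 - A / (4 * R) = 1 := by
  field_simp
  linarith

lemma warped_killing_numerator_eq (ν rm rp s r : ℝ) (hs : s ^ 2 = rp * rm * (ν ^ 2 + 3)) :
    (2 * ν * r - s) ^ 2 - (ν ^ 2 + 3) * (r - rp) * (r - rm) =
      4 * ((r / 4) * (3 * (ν ^ 2 - 1) * r + (ν ^ 2 + 3) * (rp + rm) - 4 * ν * s)) := by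
  linear_combination hs

theorem no_static_limit_general
    (ν rm rp : ℝ) (hrm : 0 < rm) (hrmp : rm < rp)
    (s : ℝ) (hs : s = Real.sqrt (rp * rm * (ν ^ 2 + 3)))
    (Rsq Nsq Nθ : ℝ → ℝ)
    (hR : ∀ r, Rsq r = (r / 4) * (3 * (ν ^ 2 - 1) * r + (ν ^ 2 + 3) * (rp + rm) - 4 * ν * s))
    (hNsq : ∀ r, Nsq r = (ν ^ 2 + 3) * (r - rp) * (r - rm) / (4 * Rsq r))
    (hNθ : ∀ r, Nθ r = (2 * ν * r - s) / (2 * Rsq r)) :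
    ∀ r, rp ≤ r → 0 < Rsq r → Nsq r < Rsq r * (Nθ r) ^ 2 := by
  intro r _ hRpos
  have hs_sq : s ^ 2 = rp * rm * (ν ^ 2 + 3) := by
    have hrp : 0 < rp := hrm.trans hrmp
    rw [hs, Real.sq_sqrt (by positivity)]
  have hnorm : Rsq r * Nθ r ^ 2 - Nsq r = 1 := by
    rw [hNsq, hNθ]
    refine mul_div_two_mul_sq_sub_div_four_mul_eq_one hRpos.ne' ?_
    rw [hR]
    exact warped_killing_numerator_eq ν rm rp s r hs_sq
  linarith

/-- For the spacelike stretched warped AdS₃ black hole, the Killing vector `∂_t` is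
spacelike everywhere on and outside the outer horizon: `R²(r)(N^θ(r))² > N²(r)` for all
`r ≥ r₊` with `R²(r) > 0`. Hence the spacetime has no static limit. -/
theorem no_static_limit
    (ν rm rp : ℝ) (hν : 1 < ν) (hrm : 0 < rm) (hrmp : rm < rp)
    (s : ℝ) (hs : s = Real.sqrt (rp * rm * (ν ^ 2 + 3)))
    (Rsq Nsq Nθ : ℝ → ℝ)
    (hR : ∀ r, Rsq r = (r / 4) * (3 * (ν ^ 2 - 1) * r + (ν ^ 2 + 3) * (rp + rm) - 4 * ν * s))
    (hNsq : ∀ r, Nsq r = (ν ^ 2 + 3) * (r - rp) * (r - rm) / (4 * Rsq r))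
    (hNθ : ∀ r, Nθ r = (2 * ν * r - s) / (2 * Rsq r)) :
    ∀ r, rp ≤ r → 0 < Rsq r → Nsq r < Rsq r * (Nθ r) ^ 2 :=
  no_static_limit_general ν rm rp hrm hrmp s hs Rsq Nsq Nθ hR hNsq hNθ
end
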